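/- Let X be a finite set with |X| ≥ 2 and let C be a cluster system for X. Then the following ten assertions are equivalent: (i) C is a hierarchy; (ii) C ⊆ C*; (iii) C ⊆ C_∘; (iv) every subsystem of C is a saturated patchwork; (v) every subsystem of C is a patchwork; (vi) every subsystem of C is a weak patchwork; (vii) C is a weak patchwork and C = C_extr; (viii) C_extr ⊆ C*; (ix) C* contains a maximal hierarchy on X; (x) C* is ample. -/

import Mathlib

/-- Two subsets `A`, `B` are compatible if `A ∩ B ∈ {∅, A, B}`. -/
def Compatible {α : Type*} [DecidableEq α] (A B : Finset α) : Prop :=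
  A ∩ B = ∅ ∨ A ∩ B = A ∨ A ∩ B = B

/-- A cluster system: a collection of non-empty subsets of `X`. -/
def IsCS {α : Type*} [DecidableEq α] (C : Set (Finset α)) : Prop :=
  ∀ A ∈ C, A.Nonempty

/-- The adjoint `C*`: all non-empty subsets of `X` compatible with every member of `C`. -/
def adjS {α : Type*} [DecidableEq α] (C : Set (Finset α)) : Set (Finset α) :=
  {A | A.Nonempty ∧ ∀ B ∈ C, Compatible A B}

/-- A hierarchy: a cluster system whose members are pairwise compatible. -/
def IsHierarchyS {α : Type*} [DecidableEq α] (C : Set (Finset α)) : Prop :=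
  IsCS C ∧ ∀ A ∈ C, ∀ B ∈ C, Compatible A B

/-- A maximal hierarchy: a hierarchy not properly contained in any other hierarchy. -/
def IsMaxHierarchyS {α : Type*} [DecidableEq α] (H : Set (Finset α)) : Prop :=
  IsHierarchyS H ∧ ∀ D : Set (Finset α), IsHierarchyS D → H ⊆ D → D = H

/-- A weak patchwork: incompatible members have their union in the system. -/
def IsWeakPW {α : Type*} [DecidableEq α] (C : Set (Finset α)) : Prop :=
  ∀ A ∈ C, ∀ B ∈ C, ¬Compatible A B → A ∪ B ∈ C

/-- A patchwork: incompatible members have both intersection and union in the system. -/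
def IsPW {α : Type*} [DecidableEq α] (C : Set (Finset α)) : Prop :=
  ∀ A ∈ C, ∀ B ∈ C, ¬Compatible A B → A ∩ B ∈ C ∧ A ∪ B ∈ C

/-- A saturated patchwork: for incompatible members `A`, `B`, the five sets
`A ∩ B`, `A ∪ B`, `A - B`, `B - A`, `(A ∪ B) - (A ∩ B)` lie in the system. -/
def IsSatPW {α : Type*} [DecidableEq α] (C : Set (Finset α)) : Prop :=
  ∀ A ∈ C, ∀ B ∈ C, ¬Compatible A B →
    A ∩ B ∈ C ∧ A ∪ B ∈ C ∧ A \ B ∈ C ∧ B \ A ∈ C ∧ (A ∪ B) \ (A ∩ B) ∈ C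

/-- The trivial cluster system: all singletons together with `X` itself. -/
def CtrivS (α : Type*) [Fintype α] [DecidableEq α] : Set (Finset α) :=
  {A | (∃ x : α, A = {x}) ∨ A = Finset.univ}

/-- `C` is ample: for every arc `(C₂, C₁)` of the Hasse diagram (i.e. `C₂ ⊊ C₁`
with nothing of `C` strictly between), `C₁ - C₂ ∈ C`. -/
def IsAmpleS {α : Type*} [DecidableEq α] (C : Set (Finset α)) : Prop :=
  ∀ C₁ ∈ C, ∀ C₂ ∈ C, C₂ ⊂ C₁ → (∀ B ∈ C, ¬(C₂ ⊂ B ∧ B ⊂ C₁)) → C₁ \ C₂ ∈ C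

/-- `C_extr`: the members of `C` that are not the union of two incompatible members. -/
def extrS {α : Type*} [DecidableEq α] (C : Set (Finset α)) : Set (Finset α) :=
  {A ∈ C | ¬∃ B ∈ C, ∃ B' ∈ C, ¬Compatible B B' ∧ A = B ∪ B'}

theorem exists_minimal_mem_ssuperset {α : Type*} {S : Set (Finset α)} {D E : Finset α}
    (hE : E ∈ S) (hDE : D ⊂ E) : ∃ F ∈ S, D ⊂ F ∧ ∀ B ∈ S, ¬(D ⊂ B ∧ B ⊂ F) := by
  obtain ⟨F, ⟨hF, hDF⟩, hmin⟩ :=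
    exists_minimal_of_wellFoundedLT (fun F => F ∈ S ∧ D ⊂ F) ⟨E, hE, hDE⟩
  exact ⟨F, hF, hDF, fun B hB ⟨hDB, hBF⟩ => hBF.not_subset (hmin ⟨hB, hDB⟩ hBF.subset)⟩

section Compatibility

variable {α : Type*} [DecidableEq α] {A B : Finset α}

theorem compatible_iff : Compatible A B ↔ Disjoint A B ∨ A ⊆ B ∨ B ⊆ A := by
  rw [Compatible, Finset.disjoint_iff_inter_eq_empty, Finset.inter_eq_left,
    Finset.inter_eq_right]

theorem Compatible.symm (h : Compatible A B) : Compatible B A := by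
  rw [compatible_iff] at *
  tauto

theorem compatible_self (A : Finset α) : Compatible A A :=
  compatible_iff.2 (Or.inr (Or.inl subset_rfl))

theorem Compatible.subset_or_subset_of_mem {x : α} (h : Compatible A B) (hA : x ∈ A)
    (hB : x ∈ B) : A ⊆ B ∨ B ⊆ A :=
  (compatible_iff.1 h).resolve_left (Finset.not_disjoint_iff.2 ⟨x, hA, hB⟩)

theorem compatible_of_union_mem_pair (h : A ∪ B ∈ ({A, B} : Set (Finset α))) :
    Compatible A B := by
  rcases h with h | h
  · exact compatible_iff.2 (Or.inr (Or.inr (Finset.union_eq_left.1 h)))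
  · exact compatible_iff.2 (Or.inr (Or.inl (Finset.union_eq_right.1 h)))

end Compatibility

section Adjoint

variable {α : Type*} [DecidableEq α] {A B D : Finset α} {C C' : Set (Finset α)}

theorem adjS_anti (h : C ⊆ C') : adjS C' ⊆ adjS C :=
  fun _ hA => ⟨hA.1, fun B hB => hA.2 B (h hB)⟩

theorem subset_adjS_adjS (hC : IsCS C) : C ⊆ adjS (adjS C) :=
  fun A hA => ⟨hC A hA, fun _ hB => (hB.2 A hA).symm⟩

theorem singleton_mem_adjS (x : α) (C : Set (Finset α)) : {x} ∈ adjS C := by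
  refine ⟨Finset.singleton_nonempty x, fun B _ => ?_⟩
  by_cases h : x ∈ B
  · exact compatible_iff.2 (Or.inr (Or.inl (Finset.singleton_subset_iff.2 h)))
  · exact compatible_iff.2 (Or.inl (Finset.disjoint_singleton_left.2 h))

theorem univ_mem_adjS [Fintype α] [Nonempty α] (C : Set (Finset α)) :
    Finset.univ ∈ adjS C :=
  ⟨Finset.univ_nonempty, fun B _ => compatible_iff.2 (Or.inr (Or.inr (Finset.subset_univ B)))⟩

theorem subset_inter_or_union_subset_of_mem_adjS (hA : A ∈ C) (hB : B ∈ C)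
    (hAB : ¬Compatible A B) (hD : D ∈ adjS C) {x : α} (hxA : x ∈ A) (hxB : x ∈ B)
    (hxD : x ∈ D) : D ⊆ A ∩ B ∨ A ∪ B ⊆ D := by
  have hDA := (hD.2 A hA).subset_or_subset_of_mem hxD hxA
  have hDB := (hD.2 B hB).subset_or_subset_of_mem hxD hxB
  rcases hDA with hDA | hAD <;> rcases hDB with hDB | hBD
  · exact Or.inl (Finset.subset_inter hDA hDB)
  · exact absurd (compatible_iff.2 (Or.inr (Or.inr (hBD.trans hDA)))) hAB
  · exact absurd (compatible_iff.2 (Or.inr (Or.inl (hAD.trans hDB)))) hAB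
  · exact Or.inr (Finset.union_subset hAD hBD)

end Adjoint

section Hierarchy

variable {α : Type*} [DecidableEq α] {C D H : Set (Finset α)}

theorem IsHierarchyS.mono (hD : IsHierarchyS D) (h : C ⊆ D) : IsHierarchyS C :=
  ⟨fun A hA => hD.1 A (h hA), fun A hA B hB => hD.2 A (h hA) B (h hB)⟩

theorem IsHierarchyS.isSatPW (hC : IsHierarchyS C) : IsSatPW C :=
  fun A hA B hB hAB => absurd (hC.2 A hA B hB) hAB

theorem IsHierarchyS.extrS_eq (hC : IsHierarchyS C) : extrS C = C :=
  Set.sep_eq_self_iff_mem_true.2 fun _ _ ⟨B, hB, B', hB', hBB', _⟩ => hBB' (hC.2 B hB B' hB')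

theorem IsSatPW.isPW (hC : IsSatPW C) : IsPW C :=
  fun A hA B hB hAB => ⟨(hC A hA B hB hAB).1, (hC A hA B hB hAB).2.1⟩

theorem IsPW.isWeakPW (hC : IsPW C) : IsWeakPW C :=
  fun A hA B hB hAB => (hC A hA B hB hAB).2

theorem isHierarchyS_iff_subset_adjS (hC : IsCS C) : IsHierarchyS C ↔ C ⊆ adjS C :=
  ⟨fun h A hA => ⟨hC A hA, h.2 A hA⟩, fun h => ⟨hC, fun _ hA => (h hA).2⟩⟩

theorem subset_adjS_iff_subset_inter_adjS_adjS (hC : IsCS C) :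
    C ⊆ adjS C ↔ C ⊆ adjS C ∩ adjS (adjS C) :=
  ⟨fun h => Set.subset_inter h (subset_adjS_adjS hC), fun h => h.trans Set.inter_subset_left⟩

theorem isHierarchyS_of_forall_isWeakPW (hC : IsCS C) (h : ∀ C' ⊆ C, IsWeakPW C') :
    IsHierarchyS C := by
  refine ⟨hC, fun A hA B hB => ?_⟩
  by_contra hAB
  have hpair : ({A, B} : Set (Finset α)) ⊆ C :=
    Set.insert_subset hA (Set.singleton_subset_iff.2 hB)
  exact hAB (compatible_of_union_mem_pair (h _ hpair A (.inl rfl) B (.inr rfl) hAB))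

theorem isHierarchyS_iff_isWeakPW_and_extrS_eq (hC : IsCS C) :
    IsHierarchyS C ↔ IsWeakPW C ∧ C = extrS C := by
  refine ⟨fun h => ⟨h.isSatPW.isPW.isWeakPW, h.extrS_eq.symm⟩, fun ⟨hweak, hextr⟩ => ⟨hC, ?_⟩⟩
  intro A hA B hB
  by_contra hAB
  have hunion : A ∪ B ∈ extrS C := hextr ▸ hweak A hA B hB hAB
  exact hunion.2 ⟨A, hA, B, hB, hAB, rfl⟩

/-- A `⊆`-minimal member of `C` among those incompatible with some member of `C` is not the
union of an incompatible pair, since either member of such a pair would be a smaller one. -/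
theorem isHierarchyS_iff_extrS_subset_adjS (hC : IsCS C) :
    IsHierarchyS C ↔ extrS C ⊆ adjS C := by
  refine ⟨fun h A hA => (isHierarchyS_iff_subset_adjS hC).1 h hA.1, fun h => ⟨hC, ?_⟩⟩
  intro A hA B hB
  by_contra hAB
  obtain ⟨A₀, ⟨hA₀, E, hE, hA₀E⟩, hmin⟩ := exists_minimal_of_wellFoundedLT
    (fun D => D ∈ C ∧ ∃ E ∈ C, ¬Compatible D E) ⟨A, hA, B, hB, hAB⟩
  have hextr : A₀ ∈ extrS C := by
    refine ⟨hA₀, fun ⟨B₁, hB₁, B₂, hB₂, hB₁₂, hunion⟩ => hB₁₂ ?_⟩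
    have hB₁A₀ : B₁ ⊆ A₀ := hunion ▸ Finset.subset_union_left
    have hA₀B₁ : A₀ ⊆ B₁ := hmin ⟨hB₁, B₂, hB₂, hB₁₂⟩ hB₁A₀
    have hB₂A₀ : B₂ ⊆ A₀ := hunion ▸ Finset.subset_union_right
    exact compatible_iff.2 (Or.inr (Or.inr (hB₂A₀.trans hA₀B₁)))
  exact hA₀E ((h hextr).2 E hE)

theorem isHierarchyS_sUnion {c : Set (Set (Finset α))} (hc : ∀ D ∈ c, IsHierarchyS D)
    (hchain : IsChain (· ⊆ ·) c) : IsHierarchyS (⋃₀ c) := by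
  refine ⟨fun A ⟨D, hD, hAD⟩ => (hc D hD).1 A hAD, ?_⟩
  rintro A ⟨D₁, hD₁, hAD₁⟩ B ⟨D₂, hD₂, hBD₂⟩
  rcases hchain.total hD₁ hD₂ with h | h
  · exact (hc D₂ hD₂).2 A (h hAD₁) B hBD₂
  · exact (hc D₁ hD₁).2 A hAD₁ B (h hBD₂)

theorem IsHierarchyS.exists_isMaxHierarchyS_superset (hC : IsHierarchyS C) :
    ∃ H, C ⊆ H ∧ IsMaxHierarchyS H := by
  obtain ⟨H, hCH, hH⟩ := zorn_subset_nonempty {D | IsHierarchyS D}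
    (fun c hc hchain _ => ⟨⋃₀ c, isHierarchyS_sUnion hc hchain,
      fun _ => Set.subset_sUnion_of_mem⟩) C hC
  exact ⟨H, hCH, hH.1, fun D hD hHD => (hH.2 hD hHD).antisymm hHD⟩

theorem IsMaxHierarchyS.subset_of_subset_adjS (hH : IsMaxHierarchyS H) (hC : IsCS C)
    (hHC : H ⊆ adjS C) : C ⊆ H := by
  intro B hB
  have hins : IsHierarchyS (insert B H) := by
    refine ⟨Set.forall_mem_insert.2 ⟨hC B hB, hH.1.1⟩, ?_⟩
    rintro A (rfl | hA) A' (rfl | hA')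
    · exact compatible_self _
    · exact ((hHC hA').2 _ hB).symm
    · exact (hHC hA).2 A' hB
    · exact hH.1.2 A hA A' hA'
  exact hH.2 _ hins (Set.subset_insert B H) ▸ Set.mem_insert B H

theorem isHierarchyS_iff_exists_isMaxHierarchyS_subset_adjS (hC : IsCS C) :
    IsHierarchyS C ↔ ∃ H, IsMaxHierarchyS H ∧ H ⊆ adjS C := by
  constructor
  · intro h
    obtain ⟨H, hCH, hH⟩ := h.exists_isMaxHierarchyS_superset
    exact ⟨H, hH, ((isHierarchyS_iff_subset_adjS hH.1.1).1 hH.1).trans (adjS_anti hCH)⟩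
  · rintro ⟨H, hH, hHC⟩
    exact hH.1.mono (hH.subset_of_subset_adjS hC hHC)

theorem IsHierarchyS.isAmpleS_adjS (hC : IsHierarchyS C) : IsAmpleS (adjS C) := by
  intro C₁ _ C₂ hC₂ hC₂C₁ harc
  refine ⟨Finset.sdiff_nonempty.2 hC₂C₁.not_subset, fun B hB => compatible_iff.2 ?_⟩
  have hBC : B ∈ adjS C := (isHierarchyS_iff_subset_adjS hC.1).1 hC hB
  rcases compatible_iff.1 (‹C₁ ∈ adjS C›.2 B hB) with hdisj | hC₁B | hBC₁
  · exact Or.inl (hdisj.mono_left Finset.sdiff_subset)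
  · exact Or.inr (Or.inl (Finset.sdiff_subset.trans hC₁B))
  rcases compatible_iff.1 (hC₂.2 B hB) with hdisj | hC₂B | hBC₂
  · exact Or.inr (Or.inr (Finset.subset_sdiff.2 ⟨hBC₁, hdisj.symm⟩))
  · by_cases hBC₂ : B = C₂
    · exact Or.inl (hBC₂ ▸ Finset.sdiff_disjoint)
    by_cases hBC₁' : B = C₁
    · exact Or.inr (Or.inl (hBC₁' ▸ Finset.sdiff_subset))
    exact absurd ⟨hC₂B.ssubset_of_ne (Ne.symm hBC₂), hBC₁.ssubset_of_ne hBC₁'⟩ (harc B hBC)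
  · exact Or.inl (Finset.sdiff_disjoint.mono_right hBC₂)

/-- For `x ∈ A ∩ B`, `y ∈ A - B`, `z ∈ B - A` with `A, B ∈ C`, take `C₂ ∈ C*` maximal with
`x ∈ C₂ ⊆ A ∩ B` and an arc `(C₂, C₁)` of `C*`. By maximality `C₁ ⊇ A ∪ B`, so `C₁ - C₂`
contains `y` and `z` but not `x`, and is incompatible with `A`. -/
theorem isHierarchyS_of_isAmpleS_adjS [Fintype α] (hC : IsCS C) (h : IsAmpleS (adjS C)) :
    IsHierarchyS C := by
  refine ⟨hC, fun A hA B hB => ?_⟩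
  by_contra hAB
  obtain ⟨hAB₀, hAB₁, hAB₂⟩ : ¬Disjoint A B ∧ ¬A ⊆ B ∧ ¬B ⊆ A := by
    simpa only [compatible_iff, not_or] using hAB
  obtain ⟨x, hxA, hxB⟩ := Finset.not_disjoint_iff.1 hAB₀
  obtain ⟨y, hyA, hyB⟩ := Finset.not_subset.1 hAB₁
  obtain ⟨z, hzB, hzA⟩ := Finset.not_subset.1 hAB₂
  have : Nonempty α := ⟨x⟩
  obtain ⟨C₂, -, ⟨hC₂, hxC₂, hC₂AB⟩, hmax⟩ :=
    Finite.exists_le_maximal (p := fun D => D ∈ adjS C ∧ x ∈ D ∧ D ⊆ A ∩ B)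
      ⟨singleton_mem_adjS x C, Finset.mem_singleton_self x,
        Finset.singleton_subset_iff.2 (Finset.mem_inter.2 ⟨hxA, hxB⟩)⟩
  have hzC₂ : z ∉ C₂ := fun hz => hzA (Finset.mem_inter.1 (hC₂AB hz)).1
  obtain ⟨C₁, hC₁, hC₂C₁, harc⟩ := exists_minimal_mem_ssuperset (univ_mem_adjS C)
    (Finset.ssubset_univ_iff.2 fun hC₂univ : C₂ = Finset.univ =>
      hzC₂ (hC₂univ ▸ Finset.mem_univ z))
  have hxC₁ : x ∈ C₁ := hC₂C₁.subset hxC₂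
  have hABC₁ : A ∪ B ⊆ C₁ :=
    (subset_inter_or_union_subset_of_mem_adjS hA hB hAB hC₁ hxA hxB hxC₁).resolve_left
      fun hC₁AB => hC₂C₁.not_subset (hmax ⟨hC₁, hxC₁, hC₁AB⟩ hC₂C₁.subset)
  have hy : y ∈ C₁ \ C₂ := Finset.mem_sdiff.2
    ⟨hABC₁ (Finset.mem_union_left B hyA), fun hyC₂ => hyB (Finset.mem_inter.1 (hC₂AB hyC₂)).2⟩
  have hz : z ∈ C₁ \ C₂ := Finset.mem_sdiff.2 ⟨hABC₁ (Finset.mem_union_right A hzB), hzC₂⟩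
  rcases compatible_iff.1 ((h C₁ hC₁ C₂ hC₂ hC₂C₁ harc).2 A hA) with hdisj | hsub | hsub
  · exact Finset.disjoint_left.1 hdisj hy hyA
  · exact hzA (hsub hz)
  · exact (Finset.mem_sdiff.1 (hsub hxA)).2 hxC₂

end Hierarchy

theorem stmt11_general {α : Type*} [Fintype α] [DecidableEq α]
    (C : Set (Finset α)) (hC : IsCS C) :
    [IsHierarchyS C,
     C ⊆ adjS C,
     C ⊆ adjS C ∩ adjS (adjS C),
     ∀ C' ⊆ C, IsSatPW C',
     ∀ C' ⊆ C, IsPW C',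
     ∀ C' ⊆ C, IsWeakPW C',
     IsWeakPW C ∧ C = extrS C,
     extrS C ⊆ adjS C,
     ∃ H : Set (Finset α), IsMaxHierarchyS H ∧ H ⊆ adjS C,
     IsAmpleS (adjS C)].TFAE := by
  tfae_have 1 ↔ 2 := isHierarchyS_iff_subset_adjS hC
  tfae_have 2 ↔ 3 := subset_adjS_iff_subset_inter_adjS_adjS hC
  tfae_have 1 → 4 := fun h C' hC' => (h.mono hC').isSatPW
  tfae_have 4 → 5 := fun h C' hC' => (h C' hC').isPW
  tfae_have 5 → 6 := fun h C' hC' => (h C' hC').isWeakPW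
  tfae_have 6 → 1 := isHierarchyS_of_forall_isWeakPW hC
  tfae_have 1 ↔ 7 := isHierarchyS_iff_isWeakPW_and_extrS_eq hC
  tfae_have 1 ↔ 8 := isHierarchyS_iff_extrS_subset_adjS hC
  tfae_have 1 ↔ 9 := isHierarchyS_iff_exists_isMaxHierarchyS_subset_adjS hC
  tfae_have 1 → 10 := IsHierarchyS.isAmpleS_adjS
  tfae_have 10 → 1 := isHierarchyS_of_isAmpleS_adjS hC
  tfae_finish

/-- Ten equivalent characterizations of hierarchies. -/
theorem stmt11 {α : Type*} [Fintype α] [DecidableEq α] (hcard : 2 ≤ Fintype.card α)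
    (C : Set (Finset α)) (hC : IsCS C) :
    [IsHierarchyS C,
     C ⊆ adjS C,
     C ⊆ adjS C ∩ adjS (adjS C),
     ∀ C' ⊆ C, IsSatPW C',
     ∀ C' ⊆ C, IsPW C',
     ∀ C' ⊆ C, IsWeakPW C',
     IsWeakPW C ∧ C = extrS C,
     extrS C ⊆ adjS C,
     ∃ H : Set (Finset α), IsMaxHierarchyS H ∧ H ⊆ adjS C,
     IsAmpleS (adjS C)].TFAE :=
  stmt11_general C hC
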